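/- arXiv:2209.14381 — 2 statements merged into one kernel-verified Lean document; each statement's English description precedes it below -/
import Mathlib

section
/- Let E be a Riesz space and let p, q : ℕ → ℕ satisfy the deferred property. The positive cone E₊ = {x ∈ E : 0 ≤ x} is closed under deferred statistical order convergence: if x_n ∈ E₊ for all n ∈ ℕ and x_n →^{D_{st_o}}_{p,q} x, then x ∈ E₊. -/
open Filter Topology

variable {E : Type*} [AddCommGroup E] [Lattice E]
  [CovariantClass E E (· + ·) (· ≤ ·)] [Module ℝ E] [PosSMulMono ℝ E]

/-- `p` and `q` satisfy the deferred property: `p n < q n` for all `n` and `q n → ∞`. -/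
def DeferredProperty (p q : ℕ → ℕ) : Prop :=
  (∀ n, p n < q n) ∧ Tendsto q atTop atTop

open Classical in
/-- The ratio `|{k ∈ K : p n < k ≤ q n}| / (q n - p n)`. -/
noncomputable def deferredRatio (p q : ℕ → ℕ) (K : Set ℕ) (n : ℕ) : ℝ :=
  (((Finset.Ioc (p n) (q n)).filter (fun k => k ∈ K)).card : ℝ) / ((q n : ℝ) - (p n : ℝ))

/-- The deferred density of `K ⊆ ℕ` is `a`. -/
def DeferredDensity (p q : ℕ → ℕ) (K : Set ℕ) (a : ℝ) : Prop :=
  Tendsto (deferredRatio p q K) atTop (nhds a)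

/-- `z` is deferred statistical order decreasing to `0`: there is an (infinite) set
`K = {k₁ < k₂ < ⋯}` of deferred density one along which `z` is decreasing with infimum `0`. -/
def DStatDecreasing (p q : ℕ → ℕ) (z : ℕ → E) : Prop :=
  ∃ K : Set ℕ, K.Infinite ∧ DeferredDensity p q K 1 ∧
    (∀ i ∈ K, ∀ j ∈ K, i ≤ j → z j ≤ z i) ∧ IsGLB (z '' K) 0

/-- `x` is deferred statistical order convergent to `l`. -/
def DStatOrderConv (p q : ℕ → ℕ) (x : ℕ → E) (l : E) : Prop :=
  ∃ z : ℕ → E, DStatDecreasing p q z ∧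
    ∃ K : Set ℕ, K.Infinite ∧ DeferredDensity p q K 1 ∧ ∀ k ∈ K, |x k - l| ≤ z k


/-!
Two sets of deferred density one meet in a set of deferred density one, which is infinite because
`q n → ∞`. For `i` in the set `K₁` along which `z` decreases to `0`, pick `k ≥ i` in this
intersection: then `-a ≤ x k - a ≤ |x k - a| ≤ z k ≤ z i`, so `-a` is a lower bound of `z '' K₁`,
whose infimum is `0`.
-/

section DeferredDensity

variable {p q : ℕ → ℕ}

open Classical in
theorem deferredRatio_le_one (K : Set ℕ) (n : ℕ) : deferredRatio p q K n ≤ 1 := by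
  unfold deferredRatio
  rcases le_or_gt (q n) (p n) with hqp | hpq
  · simp [Finset.Ioc_eq_empty_of_le hqp]
  · have hcard : ((Finset.Ioc (p n) (q n)).filter (· ∈ K)).card ≤ q n - p n :=
      (Finset.card_filter_le _ _).trans (Nat.card_Ioc _ _).le
    have hd : (0 : ℝ) < q n - p n := by rw [sub_pos]; exact_mod_cast hpq
    rw [div_le_one hd, ← Nat.cast_sub hpq.le]
    exact_mod_cast hcard

open Classical in
theorem deferredRatio_add_le_inter (hpq : ∀ n, p n < q n) (K₁ K₂ : Set ℕ) (n : ℕ) :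
    deferredRatio p q K₁ n + deferredRatio p q K₂ n - 1 ≤ deferredRatio p q (K₁ ∩ K₂) n := by
  unfold deferredRatio
  set A := (Finset.Ioc (p n) (q n)).filter (· ∈ K₁)
  set B := (Finset.Ioc (p n) (q n)).filter (· ∈ K₂)
  have hunion : (A ∪ B).card ≤ q n - p n :=
    (Finset.card_le_card (Finset.union_subset (Finset.filter_subset _ _)
      (Finset.filter_subset _ _))).trans (Nat.card_Ioc _ _).le
  have hsum := Finset.card_union_add_card_inter A B
  have hd : (0 : ℝ) < q n - p n := by rw [sub_pos]; exact_mod_cast hpq n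
  simp only [Set.mem_inter_iff, Finset.filter_and]
  rw [← div_self hd.ne', ← add_div, ← sub_div]
  gcongr
  rw [← Nat.cast_sub (hpq n).le]
  have : ((A ∪ B).card : ℝ) ≤ (q n - p n : ℕ) := by exact_mod_cast hunion
  have : ((A ∪ B).card : ℝ) + (A ∩ B).card = A.card + B.card := by exact_mod_cast hsum
  linarith

theorem DeferredDensity.inter (hpq : ∀ n, p n < q n) {K₁ K₂ : Set ℕ}
    (h₁ : DeferredDensity p q K₁ 1) (h₂ : DeferredDensity p q K₂ 1) :
    DeferredDensity p q (K₁ ∩ K₂) 1 := by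
  have hlower : Tendsto (fun n => deferredRatio p q K₁ n + deferredRatio p q K₂ n - 1)
      atTop (𝓝 1) := by
    simpa using (h₁.add h₂).sub_const 1
  exact tendsto_of_tendsto_of_tendsto_of_le_of_le hlower tendsto_const_nhds
    (deferredRatio_add_le_inter hpq K₁ K₂) (deferredRatio_le_one _)

open Classical in
/-- If `K ⊆ [0, N]`, its count in `(p n, q n]` is at most `N - p n`, while density one makes it
exceed `(q n - p n) / 2`; together these force `q n < 2 N`. -/
theorem DeferredDensity.infinite (hpq : DeferredProperty p q) {K : Set ℕ}
    (hK : DeferredDensity p q K 1) : K.Infinite := by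
  intro hfin
  obtain ⟨N, hN⟩ := hfin.bddAbove
  have hhalf : ∀ᶠ n in atTop, 1 / 2 < deferredRatio p q K n :=
    (tendsto_order.mp hK).1 _ (by norm_num)
  obtain ⟨n, hn, hqn⟩ := (hhalf.and (hpq.2.eventually_ge_atTop (2 * N))).exists
  unfold deferredRatio at hn
  set c := ((Finset.Ioc (p n) (q n)).filter (· ∈ K)).card
  have hc : c ≤ N - p n := by
    refine (Finset.card_le_card fun k hk => ?_).trans (Nat.card_Ioc _ _).le
    rw [Finset.mem_filter, Finset.mem_Ioc] at hk
    exact Finset.mem_Ioc.mpr ⟨hk.1.1, hN hk.2⟩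
  have hd : (0 : ℝ) < q n - p n := by rw [sub_pos]; exact_mod_cast hpq.1 n
  rw [lt_div_iff₀ hd] at hn
  have hqN : (2 * N : ℝ) ≤ q n := by exact_mod_cast hqn
  rcases (by omega : c + p n ≤ N ∨ c = 0) with hle | hzero
  · have : (c : ℝ) + p n ≤ N := by exact_mod_cast hle
    linarith
  · rw [hzero, Nat.cast_zero] at hn
    linarith

end DeferredDensity

theorem stmt10 (p q : ℕ → ℕ) (hpq : DeferredProperty p q) (x : ℕ → E) (a : E)
    (hpos : ∀ n, 0 ≤ x n) (hx : DStatOrderConv p q x a) : 0 ≤ a := by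
  obtain ⟨z, ⟨K₁, -, hd₁, hanti, hglb⟩, K₂, -, hd₂, hbound⟩ := hx
  have hK : (K₁ ∩ K₂).Infinite := (hd₁.inter hpq.1 hd₂).infinite hpq
  refine neg_nonpos.mp (hglb.2 ?_)
  rintro _ ⟨i, hi, rfl⟩
  obtain ⟨k, ⟨hk₁, hk₂⟩, hik⟩ := hK.exists_gt i
  calc -a ≤ x k - a := by simpa using hpos k
    _ ≤ |x k - a| := le_abs_self _
    _ ≤ z k := hbound k hk₂
    _ ≤ z i := hanti i hi k hk₁ hik.le
end

section
/- Let E be a Riesz space and let p, q : ℕ → ℕ satisfy the deferred property. If x_n →^{D_{st_o}}_{p,q} x, y_n →^{D_{st_o}}_{p,q} y, and x_n ≥ y_n for every n ∈ ℕ, then x ≥ y. -/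
open Filter Topology

variable {E : Type*} [AddCommGroup E] [Lattice E]
  [CovariantClass E E (· + ·) (· ≤ ·)] [Module ℝ E] [PosSMulMono ℝ E]

/-! Intersecting the four density-one index sets gives a set `S` of density one, which is infinite
because `q n → ∞`. On `S`, `b - a ≤ |x k - a| + |y k - b| ≤ z k + w k` with `z` and `w` decreasing
to `0`. For fixed `k ∈ S` and larger `j ∈ S` this gives `b - a - z k ≤ w j`, hence `b - a ≤ z k`,
and then `b - a ≤ 0`. -/

section DeferredRatio

open Finset

variable {p q : ℕ → ℕ} {n : ℕ}

lemma deferredRatio_add_deferredRatio_le (h : p n < q n) (A B : Set ℕ) :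
    deferredRatio p q A n + deferredRatio p q B n ≤ 1 + deferredRatio p q (A ∩ B) n := by
  classical
  have hd : (0 : ℝ) < q n - p n := sub_pos.2 (by exact_mod_cast h)
  simp only [deferredRatio]
  -- abstracting `A ∩ B` keeps the classical decidability instance of `deferredRatio`
  generalize hC : A ∩ B = C
  have hcard : #{k ∈ Ioc (p n) (q n) | k ∈ A} + #{k ∈ Ioc (p n) (q n) | k ∈ B}
      ≤ q n - p n + #{k ∈ Ioc (p n) (q n) | k ∈ C} := by
    rw [← Nat.card_Ioc, ← card_union_add_card_inter, ← hC]
    gcongr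
    · exact union_subset (filter_subset _ _) (filter_subset _ _)
    · intro k
      simp only [mem_inter, mem_filter, Set.mem_inter_iff]
      tauto
  rw [← add_div, one_add_div hd.ne', div_le_div_iff_of_pos_right hd, ← Nat.cast_sub h.le]
  exact_mod_cast hcard

lemma deferredRatio_mono {A B : Set ℕ} (hAB : A ⊆ B) (h : p n ≤ q n) :
    deferredRatio p q A n ≤ deferredRatio p q B n := by
  classical
  refine div_le_div_of_nonneg_right ?_ (sub_nonneg.2 (by exact_mod_cast h))
  exact_mod_cast card_le_card (monotone_filter_right _ fun k _ hk => hAB hk)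

lemma deferredRatio_le_of_subset_Iic {S : Set ℕ} {N : ℕ} (hS : S ⊆ Set.Iic N) (h : p n < q n)
    (hN : N ≤ q n) : deferredRatio p q S n ≤ N / q n := by
  classical
  have hcard : #{k ∈ Ioc (p n) (q n) | k ∈ S} ≤ N - p n := by
    rw [← Nat.card_Ioc]
    exact card_le_card fun k hk => by
      simp only [mem_filter, mem_Ioc] at hk
      exact mem_Ioc.2 ⟨hk.1.1, hS hk.2⟩
  have hd : (0 : ℝ) < q n - p n := sub_pos.2 (by exact_mod_cast h)
  have hq : (0 : ℝ) < q n := by exact_mod_cast (Nat.zero_le _).trans_lt h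
  simp only [deferredRatio]
  rw [div_le_div_iff₀ hd hq]
  rcases le_or_gt (p n) N with hpN | hpN
  · have hcard' : (#{k ∈ Ioc (p n) (q n) | k ∈ S} : ℝ) ≤ N - p n := by
      rw [← Nat.cast_sub hpN]
      exact_mod_cast hcard
    have : (N : ℝ) ≤ q n := by exact_mod_cast hN
    have : (0 : ℝ) ≤ p n := by positivity
    nlinarith
  · rw [Nat.sub_eq_zero_of_le hpN.le, Nat.le_zero] at hcard
    rw [hcard, Nat.cast_zero, zero_mul]
    exact mul_nonneg (Nat.cast_nonneg _) hd.le

end DeferredRatio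

namespace DeferredDensity

variable {p q : ℕ → ℕ}

lemma inter_s11 {A B : Set ℕ} (hpq : ∀ n, p n < q n) (hA : DeferredDensity p q A 1)
    (hB : DeferredDensity p q B 1) : DeferredDensity p q (A ∩ B) 1 := by
  have hlower : Tendsto (fun n => deferredRatio p q A n + deferredRatio p q B n - 1)
      atTop (𝓝 1) := by
    simpa using (hA.add hB).sub_const 1
  refine tendsto_of_tendsto_of_tendsto_of_le_of_le hlower hA (fun n => ?_) fun n => ?_
  · simpa [sub_le_iff_le_add, add_comm] using deferredRatio_add_deferredRatio_le (hpq n) A B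
  · exact deferredRatio_mono Set.inter_subset_left (hpq n).le

lemma infinite_s11 {S : Set ℕ} (hpq : DeferredProperty p q) (hS : DeferredDensity p q S 1) :
    S.Infinite := by
  intro hfin
  obtain ⟨N, hN⟩ := hfin.bddAbove
  have hle : ∀ᶠ n in atTop, deferredRatio p q S n ≤ N / q n := by
    filter_upwards [hpq.2.eventually_ge_atTop N] with n hn
    exact deferredRatio_le_of_subset_Iic hN (hpq.1 n) hn
  have hzero : Tendsto (fun n => (N : ℝ) / q n) atTop (𝓝 0) :=
    tendsto_const_nhds.div_atTop (tendsto_natCast_atTop_atTop.comp hpq.2)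
  exact zero_lt_one.not_ge (le_of_tendsto_of_tendsto hS hzero hle)

end DeferredDensity

lemma AntitoneOn.isGLB_image_of_subset {α : Type*} [Preorder α] {z : ℕ → α} {S T : Set ℕ}
    {c : α} (hz : AntitoneOn z S) (h : IsGLB (z '' S) c) (hTS : T ⊆ S) (hT : T.Infinite) :
    IsGLB (z '' T) c := by
  refine ⟨lowerBounds_mono_set (Set.image_mono hTS) h.1, fun d hd => h.2 ?_⟩
  rintro _ ⟨k, hk, rfl⟩
  obtain ⟨j, hj, hkj⟩ := hT.exists_gt k
  exact (hd (Set.mem_image_of_mem z hj)).trans (hz hk (hTS hj) hkj.le)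

lemma AntitoneOn.le_zero_of_forall_le_add {α : Type*} [AddCommGroup α] [PartialOrder α]
    [AddLeftMono α] {z w : ℕ → α} {S : Set ℕ} {c : α} (hz : AntitoneOn z S)
    (hw : AntitoneOn w S) (hS : S.Infinite) (hz0 : IsGLB (z '' S) 0) (hw0 : IsGLB (w '' S) 0)
    (h : ∀ k ∈ S, c ≤ z k + w k) : c ≤ 0 := by
  refine hz0.2 ?_
  rintro _ ⟨k, hk, rfl⟩
  have hwk : IsGLB (w '' (S \ Set.Iio k)) 0 :=
    hw.isGLB_image_of_subset hw0 Set.sdiff_subset (hS.sdiff (Set.finite_Iio k))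
  refine sub_nonpos.1 (hwk.2 ?_)
  rintro _ ⟨j, ⟨hj, hkj⟩, rfl⟩
  calc c - z k ≤ c - z j := sub_le_sub_left (hz hk hj (not_lt.1 hkj)) c
    _ ≤ w j := sub_le_iff_le_add'.2 (h j hj)

lemma sub_le_abs_sub_add_abs_sub {α : Type*} [Lattice α] [AddCommGroup α] [AddLeftMono α]
    {a b x y : α} (hyx : y ≤ x) : b - a ≤ |x - a| + |y - b| :=
  calc b - a = (y - a) + (b - y) := by abel
    _ ≤ (x - a) + (b - y) := by gcongr
    _ ≤ |x - a| + |y - b| := add_le_add (le_abs_self _) (abs_sub_comm y b ▸ le_abs_self _)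

set_option linter.unusedSectionVars false in
theorem stmt11 (p q : ℕ → ℕ) (hpq : DeferredProperty p q) (x y : ℕ → E) (a b : E)
    (hx : DStatOrderConv p q x a) (hy : DStatOrderConv p q y b)
    (hxy : ∀ n, y n ≤ x n) : b ≤ a := by
  obtain ⟨z, ⟨Kz, -, hKz, hz, hz0⟩, K, -, hK, hxK⟩ := hx
  obtain ⟨w, ⟨Kw, -, hKw, hw, hw0⟩, L, -, hL, hyL⟩ := hy
  set S := (Kz ∩ Kw) ∩ (K ∩ L)
  have hS : S.Infinite := ((hKz.inter_s11 hpq.1 hKw).inter_s11 hpq.1 (hK.inter_s11 hpq.1 hL)).infinite_s11 hpq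
  have hSz : S ⊆ Kz := fun k hk => hk.1.1
  have hSw : S ⊆ Kw := fun k hk => hk.1.2
  refine sub_nonpos.1 <|
    AntitoneOn.le_zero_of_forall_le_add (AntitoneOn.mono hz hSz) (AntitoneOn.mono hw hSw) hS
    (AntitoneOn.isGLB_image_of_subset hz hz0 hSz hS)
    (AntitoneOn.isGLB_image_of_subset hw hw0 hSw hS) fun k hk => ?_
  exact (sub_le_abs_sub_add_abs_sub (hxy k)).trans (add_le_add (hxK k hk.2.1) (hyL k hk.2.2))
end
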